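/- arXiv:1005.2094 — 2 statements merged into one kernel-verified Lean document; each statement's English description precedes it below -/
import Mathlib

section
/- The star product ⋆ is normalized: for every k ≥ 1 and every smooth function f on U, D_k(1, f) = D_k(f, 1) = 0, and hence 1 ⋆ f = f ⋆ 1 = f. This follows because every graph in A_2(k) with k ≥ 1 has at least one edge, so both external vertices have degree at least one. -/
open Finset

/-! ### Functions on `ℂ^m` and Wirtinger derivatives -/

/-- Points of `ℂ^m`. -/
abbrev Cm (m : ℕ) := Fin m → ℂ

/-- Complex-valued functions on `ℂ^m`. -/
abbrev Fn (m : ℕ) := Cm m → ℂ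

/-- The Wirtinger derivative `∂/∂z^p`. -/
noncomputable def dz {m : ℕ} (p : Fin m) (f : Fn m) : Fn m := fun x =>
  (2 : ℂ)⁻¹ * (fderiv ℝ f x (Pi.single p 1) - Complex.I * fderiv ℝ f x (Pi.single p Complex.I))

/-- The Wirtinger derivative `∂/∂z̄^p`. -/
noncomputable def dzbar {m : ℕ} (p : Fin m) (f : Fn m) : Fn m := fun x =>
  (2 : ℂ)⁻¹ * (fderiv ℝ f x (Pi.single p 1) + Complex.I * fderiv ℝ f x (Pi.single p Complex.I))

/-- Iterated holomorphic derivatives `∂^{|L|} f / ∂z^{L}`. -/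
noncomputable def dzList {m : ℕ} (L : List (Fin m)) (f : Fn m) : Fn m := L.foldr dz f

/-- Iterated antiholomorphic derivatives `∂^{|L|} f / ∂z̄^{L}`. -/
noncomputable def dzbarList {m : ℕ} (L : List (Fin m)) (f : Fn m) : Fn m := L.foldr dzbar f

/-- The matrix `g_{p q̄} = ∂² Φ_{-1} / ∂z^p ∂z̄^q` of the (formal) Kähler metric determined
by a formal potential `Φ` (given by its coefficients `Φ w`, `w ≥ -1`). -/
noncomputable def gMat {m : ℕ} (Φ : ℤ → Fn m) (x : Cm m) : Matrix (Fin m) (Fin m) ℂ :=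
  Matrix.of fun p q => dzbar q (dz p (Φ (-1))) x

/-- The entries `g^{q̄ p}` of the pointwise inverse of the metric matrix. -/
noncomputable def gInv {m : ℕ} (Φ : ℤ → Fn m) (q p : Fin m) : Fn m := fun x => (gMat Φ x)⁻¹ q p

/-- A formal potential is admissible on `U` when all its coefficients are smooth on `U`
and the metric matrix is invertible at every point of `U`. -/
def PotentialOK {m : ℕ} (Φ : ℤ → Fn m) (U : Set (Cm m)) : Prop :=
  (∀ w : ℤ, -1 ≤ w → ContDiffOn ℝ (⊤ : ℕ∞) (Φ w) U) ∧ ∀ x ∈ U, IsUnit (gMat Φ x)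

/-! ### Weighted acyclic graphs with `n` external vertices -/

/-- A weighted acyclic graph with `n` (numbered, distinct) external vertices:
finitely many vertices and directed edges (parallel edges allowed, no directed cycles),
every internal vertex (i.e. vertex not in the range of `ext`) has weight `≥ -1`, weight `-1`
internal vertices have degree at least 3, every internal vertex has at least one incoming and
one outgoing edge, the first external vertex is a source and the last one is a sink.
External vertices carry the (irrelevant) weight `0` by convention. -/
structure WGraph (n : ℕ) where
  nV : ℕ
  nE : ℕ
  head : Fin nE → Fin nV
  tail : Fin nE → Fin nV
  ext : Fin n ↪ Fin nV
  wt : Fin nV → ℤ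
  acyclic : ∀ v, ¬ Relation.TransGen (fun a b => ∃ e, tail e = a ∧ head e = b) v v
  wt_ext : ∀ i, wt (ext i) = 0
  wt_ge : ∀ v, (∀ i, ext i ≠ v) → -1 ≤ wt v
  internal_in : ∀ v, (∀ i, ext i ≠ v) → ∃ e, head e = v
  internal_out : ∀ v, (∀ i, ext i ≠ v) → ∃ e, tail e = v
  wt_neg_deg : ∀ v, (∀ i, ext i ≠ v) → wt v = -1 →
    3 ≤ (univ.filter fun e => head e = v).card + (univ.filter fun e => tail e = v).card
  first_source : ∀ (e) (i : Fin n), head e = ext i → (i : ℕ) ≠ 0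
  last_sink : ∀ (e) (i : Fin n), tail e = ext i → (i : ℕ) ≠ n - 1

namespace WGraph

variable {n : ℕ}

/-- A vertex is internal when it is not one of the external vertices. -/
def Internal (G : WGraph n) (v : Fin G.nV) : Prop := ∀ i, G.ext i ≠ v

/-- `G.edgeRel a b` holds when there is an edge from `a` to `b`. -/
def edgeRel (G : WGraph n) (a b : Fin G.nV) : Prop := ∃ e, G.tail e = a ∧ G.head e = b

/-- Reachability along directed paths (reflexive-transitive closure of `edgeRel`);
`G.Reach a b` with `a ≠ b` says that `b` is a successor of `a`. -/
def Reach (G : WGraph n) : Fin G.nV → Fin G.nV → Prop := Relation.ReflTransGen G.edgeRel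

/-- Number of incoming edges of a vertex. -/
def inDeg (G : WGraph n) (v : Fin G.nV) : ℕ := (univ.filter fun e => G.head e = v).card

/-- Number of outgoing edges of a vertex. -/
def outDeg (G : WGraph n) (v : Fin G.nV) : ℕ := (univ.filter fun e => G.tail e = v).card

/-- Total weight `W(G) = |E_G| + Σ_{v internal} w(v)` (external vertices have weight 0). -/
def W (G : WGraph n) : ℤ := (G.nE : ℤ) + ∑ v, G.wt v

/-- Isomorphism of weighted graphs with numbered external vertices: bijections of
vertices and edges preserving heads, tails, the numbered external vertices, and weights. -/
def Iso (G G' : WGraph n) : Prop :=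
  ∃ (σ : Fin G.nV ≃ Fin G'.nV) (τ : Fin G.nE ≃ Fin G'.nE),
    (∀ e, G'.head (τ e) = σ (G.head e)) ∧ (∀ e, G'.tail (τ e) = σ (G.tail e)) ∧
    (∀ i, G'.ext i = σ (G.ext i)) ∧ (∀ v, G'.wt (σ v) = G.wt v)

/-- The order `|Aut(G)|` of the automorphism group of `G`. -/
noncomputable def autCard (G : WGraph n) : ℕ :=
  Nat.card {p : (Fin G.nV ≃ Fin G.nV) × (Fin G.nE ≃ Fin G.nE) //
    (∀ e, G.head (p.2 e) = p.1 (G.head e)) ∧ (∀ e, G.tail (p.2 e) = p.1 (G.tail e)) ∧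
    (∀ i, G.ext i = p.1 (G.ext i)) ∧ (∀ v, G.wt (p.1 v) = G.wt v)}

/-- The number of (concretely presented) graphs isomorphic to `G`. -/
noncomputable def classCard (G : WGraph n) : ℕ := Nat.card {G' : WGraph n // G.Iso G'}

end WGraph

/-! ### Labellings and partition functions -/

/-- A labelling of a graph assigns to each edge `e` a pair of indices in `{1, …, m}`:
`(l e).1` is the label of `e` at its tail (used as an antiholomorphic index there) and
`(l e).2` is the label of `e` at its head (used as a holomorphic index there).  This is
exactly the data of an index `l(v,e)` for every incident pair of a vertex and an edge. -/
abbrev Labelling (m : ℕ) {n : ℕ} (G : WGraph n) := Fin G.nE → Fin m × Fin m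

/-- The labels assigned at `v` to the incoming edges of `v` (in the canonical edge order). -/
def inLabels {m n : ℕ} (G : WGraph n) (l : Labelling m G) (v : Fin G.nV) : List (Fin m) :=
  ((List.finRange G.nE).filter fun e => G.head e = v).map fun e => (l e).2

/-- The labels assigned at `v` to the outgoing edges of `v` (in the canonical edge order). -/
def outLabels {m n : ℕ} (G : WGraph n) (l : Labelling m G) (v : Fin G.nV) : List (Fin m) :=
  ((List.finRange G.nE).filter fun e => G.tail e = v).map fun e => (l e).1

/-- The factor `F(v)` associated to a vertex: the mixed partial derivative
`∂^{p+q} f_k/∂z^{i_1}⋯∂z^{i_p}∂z̄^{j_1}⋯∂z̄^{j_q}` of `f_k` if `v` is the `k`-th external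
vertex, and `-∂^{p+q} Φ_w/∂z^{i_1}⋯∂z^{i_p}∂z̄^{j_1}⋯∂z̄^{j_q}` if `v` is internal of
weight `w`, where the holomorphic indices are the labels of the incoming edges at `v` and the
antiholomorphic indices are the labels of the outgoing edges at `v`. -/
noncomputable def vertexFn {m n : ℕ} (Φ : ℤ → Fn m) (G : WGraph n) (l : Labelling m G)
    (f : Fin n → Fn m) (v : Fin G.nV) : Fn m :=
  if h : ∃ i, G.ext i = v then
    dzList (inLabels G l v) (dzbarList (outLabels G l v) (f h.choose))
  else
    fun x => -(dzList (inLabels G l v) (dzbarList (outLabels G l v) (Φ (G.wt v))) x)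

/-- The partition function `Λ^l_G(f_1, …, f_n)` of a labelled graph: the product over all
vertices of the vertex factors and over all edges `e` (from `u` to `v`, with `s = l(u,e)`,
`r = l(v,e)`) of the factors `g^{s̄ r}`. -/
noncomputable def Lam {m n : ℕ} (Φ : ℤ → Fn m) (G : WGraph n) (l : Labelling m G)
    (f : Fin n → Fn m) : Fn m :=
  fun x => (∏ v, vertexFn Φ G l f v x) * ∏ e, gInv Φ (l e).1 (l e).2 x

/-- The partition function `Γ_G(f_1, …, f_n)`: the contraction, along the edges of `G` and
using the inverse metric `g^{q̄p}`, of the tensors of partial derivatives attached to the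
vertices; equivalently the sum over all labellings of `Λ^l_G(f_1, …, f_n)`. -/
noncomputable def Gam {m n : ℕ} (Φ : ℤ → Fn m) (G : WGraph n) (f : Fin n → Fn m) : Fn m :=
  fun x => ∑ l : Labelling m G, Lam Φ G l f x

/-- The operator `D_k(f_1, …, f_n) = Σ_{G ∈ 𝒜_n(k)} Γ_G(f_1, …, f_n)/|Aut(G)|`, the sum
being over isomorphism classes of weighted acyclic graphs of total weight `k`; concretely
each isomorphism class is summed via all its concrete representatives, each weighted by
the reciprocal of the number of such representatives. -/
noncomputable def Dk (m : ℕ) (Φ : ℤ → Fn m) (n k : ℕ) (f : Fin n → Fn m) : Fn m := fun x =>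
  ∑ᶠ G : WGraph n, if G.W = (k : ℤ) then
    Gam Φ G f x / ((G.classCard : ℂ) * (G.autCard : ℂ)) else 0

/-- The coefficient of `h^k` in the `ℂ[[h]]`-bilinear extension of the star product
`f₁ ⋆ f₂ = Σ_k D_k(f₁,f₂) h^k` to formal power series `Σ f_i h^i`, `Σ g_j h^j` of functions
(a formal power series is encoded by its coefficient sequence `ℕ → Fn m`). -/
noncomputable def starCoeff {m : ℕ} (Φ : ℤ → Fn m) (f g : ℕ → Fn m) (k : ℕ) : Fn m := fun x =>
  ∑ p ∈ Finset.range (k + 1), ∑ q ∈ Finset.range (k + 1 - p),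
    Dk m Φ 2 (k - p - q) ![f p, g q] x

/-! ### Auxiliary lemmas -/

section DerivLemmas

variable {m : ℕ}

lemma dz_const (p : Fin m) (c : ℂ) : dz p (fun _ => c) = fun _ => 0 := by
  funext x
  simp [dz]

lemma dzbar_const (p : Fin m) (c : ℂ) : dzbar p (fun _ => c) = fun _ => 0 := by
  funext x
  simp [dzbar]

lemma dzList_exists_const (L : List (Fin m)) (c : ℂ) :
    ∃ c', dzList L (fun _ => c) = fun _ => c' := by
  induction L with
  | nil => exact ⟨c, rfl⟩
  | cons a L ih =>
    obtain ⟨c', hc'⟩ := ih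
    refine ⟨0, ?_⟩
    show dz a (dzList L (fun _ => c)) = fun _ => 0
    rw [hc', dz_const]

lemma dzbarList_exists_const (L : List (Fin m)) (c : ℂ) :
    ∃ c', dzbarList L (fun _ => c) = fun _ => c' := by
  induction L with
  | nil => exact ⟨c, rfl⟩
  | cons a L ih =>
    obtain ⟨c', hc'⟩ := ih
    refine ⟨0, ?_⟩
    show dzbar a (dzbarList L (fun _ => c)) = fun _ => 0
    rw [hc', dzbar_const]

lemma dzList_const_of_ne_nil {L : List (Fin m)} (hL : L ≠ []) (c : ℂ) :
    dzList L (fun _ => c) = fun _ => 0 := by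
  cases L with
  | nil => exact absurd rfl hL
  | cons a L =>
    obtain ⟨c', hc'⟩ := dzList_exists_const L c
    show dz a (dzList L (fun _ => c)) = fun _ => 0
    rw [hc', dz_const]

lemma dzbarList_const_of_ne_nil {L : List (Fin m)} (hL : L ≠ []) (c : ℂ) :
    dzbarList L (fun _ => c) = fun _ => 0 := by
  cases L with
  | nil => exact absurd rfl hL
  | cons a L =>
    obtain ⟨c', hc'⟩ := dzbarList_exists_const L c
    show dzbar a (dzbarList L (fun _ => c)) = fun _ => 0
    rw [hc', dzbar_const]

lemma dzList_one_of_ne_nil {L : List (Fin m)} (hL : L ≠ []) :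
    dzList L (1 : Fn m) = fun _ => 0 :=
  dzList_const_of_ne_nil hL 1

lemma dzbarList_one_of_ne_nil {L : List (Fin m)} (hL : L ≠ []) :
    dzbarList L (1 : Fn m) = fun _ => 0 :=
  dzbarList_const_of_ne_nil hL 1

end DerivLemmas

namespace WGraph

/-- Any self-embedding of `Fin 2` is surjective. -/
lemma emb_surj (s : Fin 2 ↪ Fin 2) : ∀ v, ∃ i, s i = v := fun v =>
  (Finite.injective_iff_surjective.mp s.injective) v

/-- If a graph has at least one edge, then the first external vertex has an outgoing edge. -/
lemma exists_tail_ext_zero (G : WGraph 2) (h : 0 < G.nE) :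
    ∃ e, G.tail e = G.ext 0 := by
  letI : IsTrans (Fin G.nV) (Relation.TransGen G.edgeRel) :=
    ⟨fun _ _ _ => Relation.TransGen.trans⟩
  letI : IsIrrefl (Fin G.nV) (Relation.TransGen G.edgeRel) := ⟨G.acyclic⟩
  have wf : WellFounded (Relation.TransGen G.edgeRel) :=
    Finite.wellFounded_of_trans_of_irrefl _
  obtain ⟨v, ⟨e, he⟩, hmin⟩ :=
    wf.has_min {v | ∃ e, G.tail e = v} ⟨G.tail ⟨0, h⟩, ⟨0, h⟩, rfl⟩
  by_cases hint : ∀ i, G.ext i ≠ v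
  · obtain ⟨e', he'⟩ := G.internal_in v hint
    exact absurd (Relation.TransGen.single ⟨e', rfl, he'⟩) (hmin _ ⟨e', rfl⟩)
  · push_neg at hint
    obtain ⟨i, hi⟩ := hint
    have hne : (i : ℕ) ≠ 1 := G.last_sink e i (by rw [he, ← hi])
    have hi0 : i = 0 := Fin.ext (by have := i.isLt; omega)
    exact ⟨e, by rw [he, ← hi, hi0]⟩

/-- If a graph has at least one edge, then the last external vertex has an incoming edge. -/
lemma exists_head_ext_one (G : WGraph 2) (h : 0 < G.nE) :
    ∃ e, G.head e = G.ext 1 := by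
  letI : IsTrans (Fin G.nV) (Relation.TransGen (Function.swap G.edgeRel)) :=
    ⟨fun _ _ _ => Relation.TransGen.trans⟩
  letI : IsIrrefl (Fin G.nV) (Relation.TransGen (Function.swap G.edgeRel)) :=
    ⟨fun v hv => G.acyclic v (Relation.transGen_swap.mp hv)⟩
  have wf : WellFounded (Relation.TransGen (Function.swap G.edgeRel)) :=
    Finite.wellFounded_of_trans_of_irrefl _
  obtain ⟨v, ⟨e, he⟩, hmin⟩ :=
    wf.has_min {v | ∃ e, G.head e = v} ⟨G.head ⟨0, h⟩, ⟨0, h⟩, rfl⟩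
  by_cases hint : ∀ i, G.ext i ≠ v
  · obtain ⟨e', he'⟩ := G.internal_out v hint
    exact absurd (Relation.TransGen.single ⟨e', he', rfl⟩) (hmin _ ⟨e', rfl⟩)
  · push_neg at hint
    obtain ⟨i, hi⟩ := hint
    have hne : (i : ℕ) ≠ 0 := G.first_source e i (by rw [he, ← hi])
    have hi1 : i = 1 := Fin.ext (by have := i.isLt; omega)
    exact ⟨e, by rw [he, ← hi, hi1]⟩

/-- A graph of positive total weight has an edge. -/
lemma nE_pos (G : WGraph 2) (h : 1 ≤ G.W) : 0 < G.nE := by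
  by_contra h0
  push_neg at h0
  have hE : G.nE = 0 := by omega
  have hsum : ∑ v, G.wt v = 0 := by
    refine Finset.sum_eq_zero fun v _ => ?_
    by_cases hint : ∀ i, G.ext i ≠ v
    · obtain ⟨e, _⟩ := G.internal_in v hint
      exact absurd e.isLt (by omega)
    · push_neg at hint
      obtain ⟨i, hi⟩ := hint
      rw [← hi, G.wt_ext]
  rw [WGraph.W, hE, hsum] at h
  omega

/-- A graph of total weight `0` has no edges. -/
lemma nE_eq_zero (G : WGraph 2) (hW : G.W = 0) : G.nE = 0 := by
  classical
  set A := univ.filter (fun v => (∀ i, G.ext i ≠ v) ∧ G.wt v = -1) with hA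
  have hin : ∑ v, G.inDeg v = G.nE := by
    have h := Finset.card_eq_sum_card_fiberwise
      (f := G.head) (s := univ) (t := univ) (fun e _ => mem_univ _)
    simpa [WGraph.inDeg] using h.symm
  have hout : ∑ v, G.outDeg v = G.nE := by
    have h := Finset.card_eq_sum_card_fiberwise
      (f := G.tail) (s := univ) (t := univ) (fun e _ => mem_univ _)
    simpa [WGraph.outDeg] using h.symm
  have hdeg : ∑ v, (G.inDeg v + G.outDeg v) = 2 * G.nE := by
    rw [Finset.sum_add_distrib, hin, hout]; ring
  have h3a : 3 * A.card ≤ 2 * G.nE := by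
    have h1 : A.card • 3 ≤ ∑ v ∈ A, (G.inDeg v + G.outDeg v) := by
      refine Finset.card_nsmul_le_sum A _ 3 fun v hv => ?_
      obtain ⟨-, hint, hm1⟩ := Finset.mem_filter.mp hv
      exact G.wt_neg_deg v hint hm1
    have h2 : ∑ v ∈ A, (G.inDeg v + G.outDeg v) ≤ ∑ v, (G.inDeg v + G.outDeg v) :=
      Finset.sum_le_sum_of_subset A.subset_univ
    rw [hdeg] at h2
    calc 3 * A.card = A.card • 3 := by rw [smul_eq_mul]; ring
      _ ≤ _ := h1.trans h2
  have h5 : -(A.card : ℤ) ≤ ∑ v, G.wt v := by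
    have hsplit := Finset.sum_add_sum_compl A G.wt
    have hA1 : ∑ v ∈ A, G.wt v = -(A.card : ℤ) := by
      rw [Finset.sum_congr rfl (fun v hv => ((Finset.mem_filter.mp (hA ▸ hv)).2.2))]
      simp [mul_comm]
    have hA2 : 0 ≤ ∑ v ∈ Aᶜ, G.wt v := by
      refine Finset.sum_nonneg fun v hv => ?_
      have hv' : v ∉ A := Finset.mem_compl.mp hv
      rw [hA, Finset.mem_filter] at hv'
      push_neg at hv'
      by_cases hint : ∀ i, G.ext i ≠ v
      · have h1 := G.wt_ge v hint
        have h2 : G.wt v ≠ -1 := hv' (Finset.mem_univ v) hint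
        omega
      · push_neg at hint
        obtain ⟨i, hi⟩ := hint
        rw [← hi, G.wt_ext]
    omega
  have hWE : (G.nE : ℤ) + ∑ v, G.wt v = 0 := hW
  have hle : G.nE ≤ A.card := by
    have : (G.nE : ℤ) ≤ (A.card : ℤ) := by omega
    exact_mod_cast this
  omega

/-- Trivial graph: two external vertices, no edges, with a chosen numbering. -/
def trivG (s : Fin 2 ↪ Fin 2) : WGraph 2 where
  nV := 2
  nE := 0
  head := Fin.elim0
  tail := Fin.elim0
  ext := s
  wt := fun _ => 0
  acyclic := by
    intro v h
    cases h with
    | single h => exact h.choose.elim0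
    | tail _ h => exact h.choose.elim0
  wt_ext := fun _ => rfl
  wt_ge := fun v hv => absurd (emb_surj s v).choose_spec (hv _)
  internal_in := fun v hv => absurd (emb_surj s v).choose_spec (hv _)
  internal_out := fun v hv => absurd (emb_surj s v).choose_spec (hv _)
  wt_neg_deg := fun v hv _ => absurd (emb_surj s v).choose_spec (hv _)
  first_source := fun e => e.elim0
  last_sink := fun e => e.elim0

lemma W_trivG (s : Fin 2 ↪ Fin 2) : (trivG s).W = 0 := by
  simp [WGraph.W, trivG]

lemma fin_two_cases : ∀ a : Fin 2, a = 0 ∨ a = 1 := by decide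

/-- Classification of graphs of total weight zero. -/
lemma classify (G : WGraph 2) (hW : G.W = 0) :
    G = trivG (Function.Embedding.refl _) ∨ G = trivG (Equiv.swap 0 1).toEmbedding := by
  have hE : G.nE = 0 := nE_eq_zero G hW
  have hsurj : ∀ v, ∃ i, G.ext i = v := by
    intro v
    by_contra hc
    push_neg at hc
    obtain ⟨e, _⟩ := G.internal_in v hc
    exact absurd e.isLt (by omega)
  have hV : G.nV = 2 := by
    have hb : Function.Bijective G.ext := ⟨G.ext.injective, fun v => hsurj v⟩
    have := Fintype.card_of_bijective hb
    simpa using this.symm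
  obtain ⟨nV, nE, hd, tl, ex, wt, hac, hwe, hwg, hii, hio, hwd, hfs, hls⟩ := G
  change nE = 0 at hE
  change nV = 2 at hV
  subst hE hV
  change ∀ v : Fin 2, ∃ i, ex i = v at hsurj
  have hhd : hd = Fin.elim0 := funext fun e => e.elim0
  have htl : tl = Fin.elim0 := funext fun e => e.elim0
  subst hhd htl
  have hwt : wt = fun _ => 0 := by
    funext v
    obtain ⟨i, hi⟩ := hsurj v
    rw [← hi]
    exact hwe i
  subst hwt
  rcases fin_two_cases (ex 0) with h0 | h0
  · have h1 : ex 1 = 1 := by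
      rcases fin_two_cases (ex 1) with h | h
      · exact absurd (ex.injective (h.trans h0.symm)) (by decide)
      · exact h
    have hex : ex = Function.Embedding.refl (Fin 2) := by
      apply DFunLike.ext
      intro i
      rcases fin_two_cases i with rfl | rfl
      · exact h0
      · exact h1
    subst hex
    exact Or.inl rfl
  · have h1 : ex 1 = 0 := by
      rcases fin_two_cases (ex 1) with h | h
      · exact h
      · exact absurd (ex.injective (h.trans h0.symm)) (by decide)
    have hex : ex = (Equiv.swap 0 1).toEmbedding := by
      apply DFunLike.ext
      intro i
      rcases fin_two_cases i with rfl | rfl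
      · rw [h0]; simp
      · rw [h1]; simp
    subst hex
    exact Or.inr rfl

lemma iso_W {n : ℕ} {G G' : WGraph n} (h : G.Iso G') : G'.W = G.W := by
  obtain ⟨σ, τ, _, _, _, hw⟩ := h
  have h1 : G'.nE = G.nE := by
    have := Fintype.card_congr τ
    simpa using this.symm
  have h2 : ∑ v, G'.wt v = ∑ v, G.wt v := by
    rw [← Equiv.sum_comp σ G'.wt]
    exact Finset.sum_congr rfl fun v _ => hw v
  rw [WGraph.W, WGraph.W, h1, h2]

lemma trivG_iso (s t : Fin 2 ↪ Fin 2) : (trivG s).Iso (trivG t) := by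
  have hbs : Function.Bijective s := ⟨s.injective, fun v => emb_surj s v⟩
  have hbt : Function.Bijective t := ⟨t.injective, fun v => emb_surj t v⟩
  refine ⟨(Equiv.ofBijective s hbs).symm.trans (Equiv.ofBijective t hbt),
    Equiv.refl _, fun e => e.elim0, fun e => e.elim0, fun i => ?_, fun _ => rfl⟩
  show t i = (Equiv.ofBijective t hbt) ((Equiv.ofBijective s hbs).symm (s i))
  rw [show s i = (Equiv.ofBijective s hbs) i from rfl, Equiv.symm_apply_apply]
  rfl

lemma trivG_ne : trivG (Function.Embedding.refl (Fin 2)) ≠ trivG (Equiv.swap 0 1).toEmbedding := by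
  intro h
  have := congrArg (fun G : WGraph 2 => (G.ext 0).val) h
  simp [trivG] at this
  exact absurd this (by decide)

lemma iso_trivG_iff (s : Fin 2 ↪ Fin 2) (G' : WGraph 2) :
    (trivG s).Iso G' ↔
      G' = trivG (Function.Embedding.refl _) ∨ G' = trivG (Equiv.swap 0 1).toEmbedding := by
  constructor
  · intro h
    exact classify G' (by rw [iso_W h, W_trivG])
  · rintro (rfl | rfl) <;> exact trivG_iso _ _

lemma classCard_trivG (s : Fin 2 ↪ Fin 2) : (trivG s).classCard = 2 := by
  rw [WGraph.classCard]
  have he : {G' : WGraph 2 // (trivG s).Iso G'} ≃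
      ({trivG (Function.Embedding.refl _), trivG (Equiv.swap 0 1).toEmbedding} : Set (WGraph 2)) :=
    Equiv.subtypeEquivRight fun G' => by
      rw [iso_trivG_iff]
      simp [Set.mem_insert_iff]
  rw [Nat.card_congr he, Nat.card_coe_set_eq, Set.ncard_pair trivG_ne]

lemma autCard_trivG (s : Fin 2 ↪ Fin 2) : (trivG s).autCard = 1 := by
  rw [WGraph.autCard, Nat.card_eq_one_iff_unique]
  constructor
  · constructor
    rintro ⟨⟨σ1, τ1⟩, _, _, h3, _⟩ ⟨⟨σ2, τ2⟩, _, _, h3', _⟩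
    have hσ : σ1 = σ2 := by
      apply Equiv.ext
      intro v
      obtain ⟨i, rfl⟩ := emb_surj s v
      exact (h3 i).symm.trans (h3' i)
    have hτ : τ1 = τ2 := by
      apply Equiv.ext
      intro e
      exact e.elim0
    apply Subtype.ext
    rw [Prod.ext_iff]
    exact ⟨hσ, hτ⟩
  · exact ⟨⟨(Equiv.refl _, Equiv.refl _), fun e => e.elim0, fun e => e.elim0,
      fun _ => rfl, fun _ => rfl⟩⟩

end WGraph

section GamLemmas

variable {m : ℕ}

lemma inLabels_trivG (s : Fin 2 ↪ Fin 2) (l : Labelling m (WGraph.trivG s)) (v) :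
    inLabels (WGraph.trivG s) l v = [] := by
  refine List.eq_nil_iff_forall_not_mem.mpr fun a ha => ?_
  obtain ⟨e, -, -⟩ := List.mem_map.mp ha
  exact e.elim0

lemma outLabels_trivG (s : Fin 2 ↪ Fin 2) (l : Labelling m (WGraph.trivG s)) (v) :
    outLabels (WGraph.trivG s) l v = [] := by
  refine List.eq_nil_iff_forall_not_mem.mpr fun a ha => ?_
  obtain ⟨e, -, -⟩ := List.mem_map.mp ha
  exact e.elim0

lemma Gam_trivG (Φ : ℤ → Fn m) (s : Fin 2 ↪ Fin 2) (F : Fin 2 → Fn m) (x : Cm m) :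
    Gam Φ (WGraph.trivG s) F x = F 0 x * F 1 x := by
  have huniq : ∀ l : Labelling m (WGraph.trivG s), l = fun e => e.elim0 :=
    fun l => funext fun e => e.elim0
  have hvF : ∀ (l : Labelling m (WGraph.trivG s)) (i : Fin 2),
      vertexFn Φ (WGraph.trivG s) l F (s i) x = F i x := by
    intro l i
    have hex : ∃ j, (WGraph.trivG s).ext j = s i := ⟨i, rfl⟩
    simp only [vertexFn]
    rw [dif_pos hex]
    have hch : hex.choose = i := s.injective hex.choose_spec
    erw [hch, inLabels_trivG, outLabels_trivG]
    rfl
  simp only [Gam, Lam]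
  rw [show (Finset.univ : Finset (Labelling m (WGraph.trivG s))) = {fun e => e.elim0} from
    Finset.eq_singleton_iff_unique_mem.mpr ⟨Finset.mem_univ _, fun l _ => huniq l⟩,
    Finset.sum_singleton]
  rw [show (Finset.univ : Finset (Fin (WGraph.trivG s).nE)) = ∅ from
    Finset.eq_empty_of_forall_notMem fun e => e.elim0, Finset.prod_empty, mul_one]
  have hprod : ∏ i : Fin 2, F i x =
      ∏ v, vertexFn Φ (WGraph.trivG s) (fun e => e.elim0) F v x :=
    Fintype.prod_bijective s ⟨s.injective, fun v => WGraph.emb_surj s v⟩ _ _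
      (fun i => (hvF _ i).symm)
  rw [← hprod, Fin.prod_univ_two]

lemma Dk_zero_eval (Φ : ℤ → Fn m) (F : Fin 2 → Fn m) (x : Cm m) :
    Dk m Φ 2 0 F x = F 0 x * F 1 x := by
  classical
  simp only [Dk]
  have hsupp : (Function.support fun G : WGraph 2 =>
      if G.W = ((0 : ℕ) : ℤ) then Gam Φ G F x / ((G.classCard : ℂ) * (G.autCard : ℂ)) else 0) ⊆
      ↑({WGraph.trivG (Function.Embedding.refl _),
        WGraph.trivG (Equiv.swap 0 1).toEmbedding} : Finset (WGraph 2)) := by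
    intro G hG
    simp only [Function.mem_support] at hG
    by_cases h : G.W = 0
    · rcases WGraph.classify G h with rfl | rfl <;> simp
    · exact absurd (if_neg (by simpa using h)) hG
  rw [finsum_eq_sum_of_support_subset _ hsupp,
    Finset.sum_pair WGraph.trivG_ne]
  rw [if_pos (by simpa using WGraph.W_trivG _), if_pos (by simpa using WGraph.W_trivG _),
    Gam_trivG, Gam_trivG, WGraph.classCard_trivG, WGraph.classCard_trivG,
    WGraph.autCard_trivG, WGraph.autCard_trivG]
  push_cast
  ring

lemma Dk_pos_left (Φ : ℤ → Fn m) (f : Fn m) (k : ℕ) (hk : 1 ≤ k) (x : Cm m) :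
    Dk m Φ 2 k ![1, f] x = 0 := by
  simp only [Dk]
  refine finsum_eq_zero_of_forall_eq_zero fun G => ?_
  split_ifs with h
  · have hE : 0 < G.nE := G.nE_pos (by rw [h]; exact_mod_cast hk)
    have hGam : Gam Φ G ![1, f] x = 0 := by
      simp only [Gam, Lam]
      refine Finset.sum_eq_zero fun l _ => ?_
      have hin0 : inLabels G l (G.ext 0) = [] := by
        refine List.eq_nil_iff_forall_not_mem.mpr fun a ha => ?_
        obtain ⟨e, he, -⟩ := List.mem_map.mp ha
        have := (List.mem_filter.mp he).2
        simp only [decide_eq_true_eq] at this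
        exact G.first_source e 0 this rfl
      have hout0 : outLabels G l (G.ext 0) ≠ [] := by
        obtain ⟨e, he⟩ := G.exists_tail_ext_zero hE
        refine List.ne_nil_of_mem (a := (l e).1) ?_
        exact List.mem_map.mpr ⟨e, List.mem_filter.mpr ⟨List.mem_finRange e, by simp [he]⟩, rfl⟩
      have hv0 : vertexFn Φ G l ![1, f] (G.ext 0) x = 0 := by
        have hex : ∃ i, G.ext i = G.ext 0 := ⟨0, rfl⟩
        simp only [vertexFn]
        rw [dif_pos hex]
        have hch : hex.choose = 0 := G.ext.injective hex.choose_spec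
        rw [hch, hin0]
        show dzbarList (outLabels G l (G.ext 0)) (![(1 : Fn m), f] 0) x = 0
        rw [Matrix.cons_val_zero, dzbarList_one_of_ne_nil hout0]
      rw [Finset.prod_eq_zero (Finset.mem_univ (G.ext 0)) hv0, zero_mul]
    rw [hGam, zero_div]
  · rfl

lemma Dk_pos_right (Φ : ℤ → Fn m) (f : Fn m) (k : ℕ) (hk : 1 ≤ k) (x : Cm m) :
    Dk m Φ 2 k ![f, 1] x = 0 := by
  simp only [Dk]
  refine finsum_eq_zero_of_forall_eq_zero fun G => ?_
  split_ifs with h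
  · have hE : 0 < G.nE := G.nE_pos (by rw [h]; exact_mod_cast hk)
    have hGam : Gam Φ G ![f, 1] x = 0 := by
      simp only [Gam, Lam]
      refine Finset.sum_eq_zero fun l _ => ?_
      have hout0 : outLabels G l (G.ext 1) = [] := by
        refine List.eq_nil_iff_forall_not_mem.mpr fun a ha => ?_
        obtain ⟨e, he, -⟩ := List.mem_map.mp ha
        have := (List.mem_filter.mp he).2
        simp only [decide_eq_true_eq] at this
        exact G.last_sink e 1 this rfl
      have hin0 : inLabels G l (G.ext 1) ≠ [] := by
        obtain ⟨e, he⟩ := G.exists_head_ext_one hE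
        refine List.ne_nil_of_mem (a := (l e).2) ?_
        exact List.mem_map.mpr ⟨e, List.mem_filter.mpr ⟨List.mem_finRange e, by simp [he]⟩, rfl⟩
      have hv0 : vertexFn Φ G l ![f, 1] (G.ext 1) x = 0 := by
        have hex : ∃ i, G.ext i = G.ext 1 := ⟨1, rfl⟩
        simp only [vertexFn]
        rw [dif_pos hex]
        have hch : hex.choose = 1 := G.ext.injective hex.choose_spec
        rw [hch, hout0]
        show dzList (inLabels G l (G.ext 1)) (dzbarList [] (![f, (1 : Fn m)] 1)) x = 0
        rw [Matrix.cons_val_one, Matrix.cons_val_zero]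
        show dzList (inLabels G l (G.ext 1)) (1 : Fn m) x = 0
        rw [dzList_one_of_ne_nil hin0]
      rw [Finset.prod_eq_zero (Finset.mem_univ (G.ext 1)) hv0, zero_mul]
    rw [hGam, zero_div]
  · rfl

end GamLemmas

/-! ### Statement 8 -/

/-- The star product is normalized: for every `k ≥ 1` and every smooth
function `f` on `U`, `D_k(1,f) = D_k(f,1) = 0`, and hence `1 ⋆ f = f ⋆ 1 = f` (i.e. the
`h^0`-coefficient is `f` and all higher coefficients vanish).  This is because every graph
in `𝒜₂(k)` with `k ≥ 1` has at least one edge, so both external vertices have degree at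
least one. -/
theorem statement8 {m : ℕ} (hm : 0 < m) (U : Set (Cm m)) (hU : IsOpen U)
    (hUcontr : ContractibleSpace U) (Φ : ℤ → Fn m) (hΦ : PotentialOK Φ U) :
    (∀ G : WGraph 2, 1 ≤ G.W →
      1 ≤ G.nE ∧ 1 ≤ G.outDeg (G.ext 0) + G.inDeg (G.ext 0) ∧
        1 ≤ G.outDeg (G.ext 1) + G.inDeg (G.ext 1)) ∧
    (∀ f : Fn m, ContDiffOn ℝ (⊤ : ℕ∞) f U →
      (∀ k, 1 ≤ k → Set.EqOn (Dk m Φ 2 k ![1, f]) 0 U ∧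
        Set.EqOn (Dk m Φ 2 k ![f, 1]) 0 U) ∧
      Set.EqOn (Dk m Φ 2 0 ![1, f]) f U ∧ Set.EqOn (Dk m Φ 2 0 ![f, 1]) f U) := by
  constructor
  · intro G hW
    have hE : 0 < G.nE := G.nE_pos hW
    obtain ⟨e, he⟩ := G.exists_tail_ext_zero hE
    obtain ⟨e', he'⟩ := G.exists_head_ext_one hE
    refine ⟨hE, ?_, ?_⟩
    · have h1 : 0 < G.outDeg (G.ext 0) :=
        Finset.card_pos.mpr ⟨e, Finset.mem_filter.mpr ⟨Finset.mem_univ _, he⟩⟩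
      omega
    · have h1 : 0 < G.inDeg (G.ext 1) :=
        Finset.card_pos.mpr ⟨e', Finset.mem_filter.mpr ⟨Finset.mem_univ _, he'⟩⟩
      omega
  · intro f hf
    refine ⟨fun k hk => ⟨fun x _ => ?_, fun x _ => ?_⟩, fun x _ => ?_, fun x _ => ?_⟩
    · rw [Dk_pos_left Φ f k hk x]; rfl
    · rw [Dk_pos_right Φ f k hk x]; rfl
    · rw [Dk_zero_eval]; simp
    · rw [Dk_zero_eval]; simp
end

section
/- Let G_1 ∈ L^C_2 have labelling l and let u be its second external vertex. Then the equivalence class [G_1] under the relation ∼ contains exactly α_l(u)! elements of L^C_2. -/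
open Finset

/-! ### Circuit structures and labelled circuit graphs -/

/-- A circuit structure on a graph: for each vertex a total order of its incoming edges and a
total order of its outgoing edges, encoded by the position functions `cin` and `cout`
(`c(v,e) = cin e` for `e` incoming at `v`, and `c(v,e) = cout e` for `e` outgoing at `v`),
which restrict to bijections from the incoming (resp. outgoing) edges of each vertex `v`
onto `{0, …, inDeg v - 1}` (resp. `{0, …, outDeg v - 1}`). -/
structure CircuitStructure {n : ℕ} (G : WGraph n) where
  cin : Fin G.nE → ℕ
  cout : Fin G.nE → ℕ
  cin_bij : ∀ v, Set.BijOn cin {e | G.head e = v} (Set.Iio (G.inDeg v))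
  cout_bij : ∀ v, Set.BijOn cout {e | G.tail e = v} (Set.Iio (G.outDeg v))

/-- Compatibility of a labelling and a circuit structure: at every vertex, the incoming
edges are labelled ascendingly with respect to the circuit order, and likewise the
outgoing edges. -/
def CompatibleLC {m n : ℕ} (G : WGraph n) (l : Labelling m G) (c : CircuitStructure G) : Prop :=
  (∀ e e', G.head e = G.head e' → c.cin e ≤ c.cin e' → (l e).2 ≤ (l e').2) ∧
  (∀ e e', G.tail e = G.tail e' → c.cout e ≤ c.cout e' → (l e).1 ≤ (l e').1)

/-- A weighted acyclic graph with `n` external vertices, equipped with a labelling and a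
compatible circuit structure. -/
structure LCGraph (m n : ℕ) where
  G : WGraph n
  l : Labelling m G
  c : CircuitStructure G
  compat : CompatibleLC G l c

/-- `C(G) = ∏_{v ∈ V_G} α_l(v)! β_l(v)!`, where the multi-index `α_l(v)` counts the
occurrences of each label among the incoming edges of `v` and `β_l(v)` does the same for
the outgoing edges. -/
def Cfac {m n : ℕ} (T : LCGraph m n) : ℕ :=
  ∏ v, ((∏ j, (univ.filter fun e => T.G.head e = v ∧ (T.l e).2 = j).card.factorial) *
        (∏ j, (univ.filter fun e => T.G.tail e = v ∧ (T.l e).1 = j).card.factorial))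

/-- Isomorphism of labelled circuit graphs: a graph isomorphism preserving the labelling
and the circuit structure. -/
def LCIso {m n : ℕ} (T T' : LCGraph m n) : Prop :=
  ∃ (σ : Fin T.G.nV ≃ Fin T'.G.nV) (τ : Fin T.G.nE ≃ Fin T'.G.nE),
    (∀ e, T'.G.head (τ e) = σ (T.G.head e)) ∧ (∀ e, T'.G.tail (τ e) = σ (T.G.tail e)) ∧
    (∀ i, T'.G.ext i = σ (T.G.ext i)) ∧ (∀ v, T'.G.wt (σ v) = T.G.wt v) ∧
    (∀ e, T'.l (τ e) = T.l e) ∧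
    (∀ e, T'.c.cin (τ e) = T.c.cin e) ∧ (∀ e, T'.c.cout (τ e) = T.c.cout e)

/-- The equivalence relation `∼` on labelled circuit graphs with two external vertices:
an isomorphism preserving the labelling everywhere and the circuit structure at every
vertex except possibly at the second external vertex. -/
def SimLC {m : ℕ} (T T' : LCGraph m 2) : Prop :=
  ∃ (σ : Fin T.G.nV ≃ Fin T'.G.nV) (τ : Fin T.G.nE ≃ Fin T'.G.nE),
    (∀ e, T'.G.head (τ e) = σ (T.G.head e)) ∧ (∀ e, T'.G.tail (τ e) = σ (T.G.tail e)) ∧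
    (∀ i, T'.G.ext i = σ (T.G.ext i)) ∧ (∀ v, T'.G.wt (σ v) = T.G.wt v) ∧
    (∀ e, T'.l (τ e) = T.l e) ∧
    (∀ e, T.G.head e ≠ T.G.ext 1 → T'.c.cin (τ e) = T.c.cin e) ∧
    (∀ e, T'.c.cout (τ e) = T.c.cout e)

/-! ### Auxiliary results for Statement 12 -/

section Stmt12Aux

open Equiv

/-- Rigidity: an automorphism of a weighted acyclic graph preserving the outgoing circuit
orders fixes every edge (and every vertex). -/
theorem stmt12_rigid {n : ℕ} (G : WGraph n) (co : Fin G.nE → ℕ)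
    (hco : ∀ v, Set.BijOn co {e | G.tail e = v} (Set.Iio (G.outDeg v)))
    {σ : Fin G.nV ≃ Fin G.nV} {τ : Fin G.nE ≃ Fin G.nE}
    (hh : ∀ e, G.head (τ e) = σ (G.head e)) (ht : ∀ e, G.tail (τ e) = σ (G.tail e))
    (hx : ∀ i, G.ext i = σ (G.ext i)) (hc : ∀ e, co (τ e) = co e) :
    ∀ e, τ e = e := by
  haveI : IsTrans (Fin G.nV) (Relation.TransGen G.edgeRel) :=
    ⟨fun _ _ _ h h' => Relation.TransGen.trans h h'⟩
  haveI : IsIrrefl (Fin G.nV) (Relation.TransGen G.edgeRel) := ⟨G.acyclic⟩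
  have wfT : WellFounded (Relation.TransGen G.edgeRel) :=
    Finite.wellFounded_of_trans_of_irrefl _
  have wf : WellFounded G.edgeRel :=
    Subrelation.wf (fun h => Relation.TransGen.single h) wfT
  have step : ∀ v, σ v = v → ∀ e, G.tail e = v → τ e = e := by
    intro v hv e he
    have h1 : G.tail (τ e) = v := by rw [ht, he, hv]
    have hmem : τ e ∈ {e | G.tail e = v} := h1
    have hmem' : e ∈ {e | G.tail e = v} := he
    exact (hco v).injOn hmem hmem' (hc e)
  have hfix : ∀ v, σ v = v := by
    intro v
    induction v using wf.induction with
    | _ v ih =>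
      by_cases hext : ∃ i, G.ext i = v
      · obtain ⟨i, hi⟩ := hext
        rw [← hi, ← hx]
      · obtain ⟨e, he⟩ := G.internal_in v (fun i hi => hext ⟨i, hi⟩)
        have hrel : G.edgeRel (G.tail e) v := ⟨e, rfl, he⟩
        have hτ : τ e = e := step (G.tail e) (ih _ hrel) e rfl
        rw [← he, ← hh e, hτ]
  intro e
  exact step (G.tail e) (hfix _) e rfl

theorem stmt12_lciso_symm {m n : ℕ} {T T' : LCGraph m n} (h : LCIso T T') : LCIso T' T := by
  obtain ⟨σ, τ, h1, h2, h3, h4, h5, h6, h7⟩ := h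
  refine ⟨σ.symm, τ.symm, fun e => ?_, fun e => ?_, fun i => ?_, fun v => ?_, fun e => ?_,
    fun e => ?_, fun e => ?_⟩
  · rw [Equiv.eq_symm_apply, ← h1, Equiv.apply_symm_apply]
  · rw [Equiv.eq_symm_apply, ← h2, Equiv.apply_symm_apply]
  · rw [Equiv.eq_symm_apply, ← h3]
  · rw [← h4 (σ.symm v), Equiv.apply_symm_apply]
  · rw [← h5 (τ.symm e), Equiv.apply_symm_apply]
  · rw [← h6 (τ.symm e), Equiv.apply_symm_apply]
  · rw [← h7 (τ.symm e), Equiv.apply_symm_apply]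

theorem stmt12_lciso_trans {m n : ℕ} {T T' T'' : LCGraph m n} (h : LCIso T T')
    (h' : LCIso T' T'') : LCIso T T'' := by
  obtain ⟨σ, τ, h1, h2, h3, h4, h5, h6, h7⟩ := h
  obtain ⟨σ', τ', g1, g2, g3, g4, g5, g6, g7⟩ := h'
  exact ⟨σ.trans σ', τ.trans τ', fun e => by simp [g1, h1], fun e => by simp [g2, h2],
    fun i => by simp [g3, h3], fun v => by simp [g4, h4], fun e => by simp [g5, h5],
    fun e => by simp [g6, h6], fun e => by simp [g7, h7]⟩

theorem stmt12_card_filter_equiv {N N' : ℕ} (τ : Fin N ≃ Fin N') {p : Fin N → Prop}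
    {q : Fin N' → Prop} [DecidablePred p] [DecidablePred q] (h : ∀ e, p e ↔ q (τ e)) :
    (univ.filter p).card = (univ.filter q).card :=
  Finset.card_equiv τ (by simp [h])

/-- Block lemma: in a label-compatible bijective position assignment, the position of an
element with label `j` lies in the interval reserved for label `j`. -/
theorem stmt12_block {N mm : ℕ} (s : Finset (Fin N)) (c : Fin N → ℕ) (lab : Fin N → Fin mm)
    (hlt : ∀ e ∈ s, c e < s.card)
    (hinj : ∀ e ∈ s, ∀ e' ∈ s, c e = c e' → e = e')
    (hcomp : ∀ e ∈ s, ∀ e' ∈ s, c e ≤ c e' → lab e ≤ lab e')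
    {e : Fin N} (he : e ∈ s) :
    (∑ j ∈ Finset.Iio (lab e), (s.filter fun x => lab x = j).card) ≤ c e ∧
    c e < (∑ j ∈ Finset.Iio (lab e), (s.filter fun x => lab x = j).card) +
      (s.filter fun x => lab x = lab e).card := by
  classical
  set B : Finset (Fin N) := s.filter fun x => lab x < lab e with hB
  set M : Finset (Fin N) := s.filter fun x => lab x = lab e with hM
  set C : Finset (Fin N) := s.filter fun x => lab e < lab x with hC
  have hBsum : B.card = ∑ j ∈ Finset.Iio (lab e), (s.filter fun x => lab x = j).card := by
    have hBeq : B = (Finset.Iio (lab e)).biUnion fun j => s.filter fun x => lab x = j := by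
      ext x
      simp only [hB, Finset.mem_filter, Finset.mem_biUnion, Finset.mem_Iio]
      constructor
      · rintro ⟨hx, hlt'⟩; exact ⟨lab x, hlt', hx, rfl⟩
      · rintro ⟨j, hj, hx, hjx⟩; exact ⟨hx, hjx ▸ hj⟩
    rw [hBeq, Finset.card_biUnion]
    intro a _ b _ hab
    refine Finset.disjoint_left.mpr fun x hxa hxb => hab ?_
    simp only [Finset.mem_filter] at hxa hxb
    rw [← hxa.2, ← hxb.2]
  have hBlt : ∀ x ∈ B, c x < c e := by
    intro x hx
    rw [hB, Finset.mem_filter] at hx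
    by_contra hcon
    exact absurd (hcomp e he x hx.1 (not_lt.mp hcon)) (not_le.mpr hx.2)
  have hBle : B.card ≤ c e := by
    calc B.card ≤ (Finset.range (c e)).card := by
          refine Finset.card_le_card_of_injOn c (fun x hx => Finset.mem_range.mpr (hBlt x hx)) ?_
          intro x hx y hy hxy
          exact hinj x (Finset.mem_filter.mp hx).1 y (Finset.mem_filter.mp hy).1 hxy
      _ = c e := Finset.card_range _
  have hClt : ∀ x ∈ C, c e < c x := by
    intro x hx
    rw [hC, Finset.mem_filter] at hx
    by_contra hcon
    exact absurd (hcomp x hx.1 e he (not_lt.mp hcon)) (not_le.mpr hx.2)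
  have hCle : C.card ≤ s.card - (c e + 1) := by
    calc C.card ≤ (Finset.Ico (c e + 1) s.card).card := by
          refine Finset.card_le_card_of_injOn c (fun x hx => ?_) ?_
          · exact Finset.mem_Ico.mpr ⟨hClt x hx, hlt x (Finset.mem_filter.mp hx).1⟩
          · intro x hx y hy hxy
            exact hinj x (Finset.mem_filter.mp hx).1 y (Finset.mem_filter.mp hy).1 hxy
      _ = s.card - (c e + 1) := Nat.card_Ico _ _
  have hpart : B.card + M.card + C.card = s.card := by
    have h1 := Finset.card_filter_add_card_filter_not
      (s := s) (p := fun x => lab x < lab e)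
    have h2 := Finset.card_filter_add_card_filter_not
      (s := s.filter fun x => ¬ lab x < lab e) (p := fun x => lab x = lab e)
    have hMeq : (s.filter fun x => ¬ lab x < lab e).filter (fun x => lab x = lab e) = M := by
      rw [Finset.filter_filter]
      apply Finset.filter_congr
      intro x _
      simp only [and_iff_right_iff_imp]
      intro hx; rw [hx]; exact lt_irrefl _
    have hCeq : (s.filter fun x => ¬ lab x < lab e).filter (fun x => ¬ lab x = lab e) = C := by
      rw [Finset.filter_filter]
      apply Finset.filter_congr
      intro x _
      constructor
      · rintro ⟨hnl, hne⟩
        exact lt_of_le_of_ne (not_lt.mp hnl) (fun h => hne h.symm)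
      · intro h
        exact ⟨not_lt.mpr (le_of_lt h), fun h' => absurd h (h' ▸ lt_irrefl _)⟩
    rw [hMeq, hCeq] at h2
    rw [← hB] at h1
    omega
  have hce := hlt e he
  constructor
  · omega
  · omega

/-- If two label-compatible systems have the same per-label counts, equal positions force
equal labels. -/
theorem stmt12_block_eq {N N' mm : ℕ} {s : Finset (Fin N)} {s' : Finset (Fin N')}
    {c : Fin N → ℕ} {c' : Fin N' → ℕ} {lab : Fin N → Fin mm} {lab' : Fin N' → Fin mm}
    (hlt : ∀ e ∈ s, c e < s.card)
    (hinj : ∀ e ∈ s, ∀ f ∈ s, c e = c f → e = f)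
    (hcomp : ∀ e ∈ s, ∀ f ∈ s, c e ≤ c f → lab e ≤ lab f)
    (hlt' : ∀ e ∈ s', c' e < s'.card)
    (hinj' : ∀ e ∈ s', ∀ f ∈ s', c' e = c' f → e = f)
    (hcomp' : ∀ e ∈ s', ∀ f ∈ s', c' e ≤ c' f → lab' e ≤ lab' f)
    (hcnt : ∀ j, (s.filter fun x => lab x = j).card = (s'.filter fun x => lab' x = j).card)
    {e : Fin N} {e' : Fin N'} (he : e ∈ s) (he' : e' ∈ s') (hce : c e = c' e') :
    lab e = lab' e' := by
  classical
  have hblk := stmt12_block s c lab hlt hinj hcomp he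
  have hblk' := stmt12_block s' c' lab' hlt' hinj' hcomp' he'
  simp only [← hcnt] at hblk'
  have key : ∀ j j' : Fin mm, j < j' →
      (∑ a ∈ Finset.Iio j, (s.filter fun x => lab x = a).card) +
        (s.filter fun x => lab x = j).card ≤
        ∑ a ∈ Finset.Iio j', (s.filter fun x => lab x = a).card := by
    intro j j' hjj
    have h1 : insert j (Finset.Iio j) = Finset.Iic j := Finset.Iio_insert j
    have h2 : Finset.Iic j ⊆ Finset.Iio j' := by
      intro x hx
      exact Finset.mem_Iio.mpr (lt_of_le_of_lt (Finset.mem_Iic.mp hx) hjj)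
    calc (∑ a ∈ Finset.Iio j, (s.filter fun x => lab x = a).card) +
          (s.filter fun x => lab x = j).card
        = ∑ a ∈ Finset.Iic j, (s.filter fun x => lab x = a).card := by
          rw [← h1, Finset.sum_insert (by simp)]; omega
      _ ≤ _ := Finset.sum_le_sum_of_subset h2
  rcases lt_trichotomy (lab e) (lab' e') with h | h | h
  · exfalso; have hk := key _ _ h; omega
  · exact h
  · exfalso; have hk := key _ _ h; omega

end Stmt12Aux
section Stmt12Construction

variable {m : ℕ}

/-- The incoming edges at the second external vertex. -/
abbrev S12Eu (T1 : LCGraph m 2) : Type := {e : Fin T1.G.nE // T1.G.head e = T1.G.ext 1}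

/-- The label of an incoming edge at the second external vertex. -/
def S12lab (T1 : LCGraph m 2) (a : S12Eu T1) : Fin m := (T1.l a.1).2

/-- The circuit structure at the second external vertex modified by a permutation `π`. -/
def S12cpi (T1 : LCGraph m 2) (π : Equiv.Perm (S12Eu T1)) : Fin T1.G.nE → ℕ := fun e =>
  if h : T1.G.head e = T1.G.ext 1 then T1.c.cin ((π ⟨e, h⟩ : S12Eu T1) : Fin T1.G.nE)
  else T1.c.cin e

theorem S12cpi_bij (T1 : LCGraph m 2) (π : Equiv.Perm (S12Eu T1)) (v : Fin T1.G.nV) :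
    Set.BijOn (S12cpi T1 π) {e | T1.G.head e = v} (Set.Iio (T1.G.inDeg v)) := by
  by_cases hv : v = T1.G.ext 1
  · subst hv
    have hb := T1.c.cin_bij (T1.G.ext 1)
    refine ⟨?_, ?_, ?_⟩
    · intro e he
      have he' : T1.G.head e = T1.G.ext 1 := he
      simp only [S12cpi, dif_pos he']
      exact hb.mapsTo (π ⟨e, he'⟩).2
    · intro e he f hf hef
      have he' : T1.G.head e = T1.G.ext 1 := he
      have hf' : T1.G.head f = T1.G.ext 1 := hf
      simp only [S12cpi, dif_pos he', dif_pos hf'] at hef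
      have h1 : ((π ⟨e, he'⟩ : S12Eu T1) : Fin T1.G.nE) = ((π ⟨f, hf'⟩ : S12Eu T1) : Fin T1.G.nE) :=
        hb.injOn (π ⟨e, he'⟩).2 (π ⟨f, hf'⟩).2 hef
      have h2 : (⟨e, he'⟩ : S12Eu T1) = ⟨f, hf'⟩ := π.injective (Subtype.ext h1)
      exact congrArg Subtype.val h2
    · intro y hy
      obtain ⟨x, hx, hcx⟩ := hb.surjOn hy
      have hx' : T1.G.head x = T1.G.ext 1 := hx
      refine ⟨((π.symm ⟨x, hx'⟩ : S12Eu T1) : Fin T1.G.nE), (π.symm ⟨x, hx'⟩).2, ?_⟩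
      simp only [S12cpi, dif_pos (π.symm ⟨x, hx'⟩).2]
      rw [show (⟨((π.symm ⟨x, hx'⟩ : S12Eu T1) : Fin T1.G.nE), (π.symm ⟨x, hx'⟩).2⟩ : S12Eu T1)
          = π.symm ⟨x, hx'⟩ from rfl, Equiv.apply_symm_apply]
      exact hcx
  · have hb := T1.c.cin_bij v
    refine Set.BijOn.congr hb ?_
    intro e he
    have he' : T1.G.head e = v := he
    have hne : ¬ T1.G.head e = T1.G.ext 1 := fun h => hv (he' ▸ h)
    simp only [S12cpi, dif_neg hne]

/-- The labelled circuit graph obtained from `T1` by permuting the incoming circuit order at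
the second external vertex by a label-preserving permutation `π`. -/
def S12replace (T1 : LCGraph m 2) (π : Equiv.Perm (S12Eu T1))
    (hπ : S12lab T1 ∘ π = S12lab T1) : LCGraph m 2 where
  G := T1.G
  l := T1.l
  c := { cin := S12cpi T1 π
         cout := T1.c.cout
         cin_bij := S12cpi_bij T1 π
         cout_bij := T1.c.cout_bij }
  compat := by
    refine ⟨?_, T1.compat.2⟩
    intro e f hef hle
    by_cases h : T1.G.head e = T1.G.ext 1
    · have hf : T1.G.head f = T1.G.ext 1 := hef ▸ h
      simp only [S12cpi, dif_pos h, dif_pos hf] at hle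
      have h1 : (T1.l ((π ⟨e, h⟩ : S12Eu T1) : Fin T1.G.nE)).2 ≤
          (T1.l ((π ⟨f, hf⟩ : S12Eu T1) : Fin T1.G.nE)).2 := by
        refine T1.compat.1 _ _ ?_ hle
        rw [(π ⟨e, h⟩).2, (π ⟨f, hf⟩).2]
      have he2 : (T1.l ((π ⟨e, h⟩ : S12Eu T1) : Fin T1.G.nE)).2 = (T1.l e).2 :=
        congrFun hπ ⟨e, h⟩
      have hf2 : (T1.l ((π ⟨f, hf⟩ : S12Eu T1) : Fin T1.G.nE)).2 = (T1.l f).2 :=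
        congrFun hπ ⟨f, hf⟩
      rw [he2, hf2] at h1
      exact h1
    · have hf : ¬ T1.G.head f = T1.G.ext 1 := fun h' => h (hef ▸ h')
      simp only [S12cpi, dif_neg h, dif_neg hf] at hle
      exact T1.compat.1 e f hef hle

theorem S12sim_replace (T1 : LCGraph m 2) (π : Equiv.Perm (S12Eu T1))
    (hπ : S12lab T1 ∘ π = S12lab T1) : SimLC T1 (S12replace T1 π hπ) := by
  refine ⟨Equiv.refl _, Equiv.refl _, fun e => rfl, fun e => rfl, fun i => rfl, fun v => rfl,
    fun e => rfl, fun e he => ?_, fun e => rfl⟩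
  show S12cpi T1 π e = T1.c.cin e
  simp only [S12cpi, dif_neg he]

end Stmt12Construction
/-! ### Statement 12 -/

/-- Let `G₁ ∈ 𝓛^C₂` have labelling `l` and second external vertex `u`.
Then the equivalence class `[G₁]` under `∼` contains exactly `α_l(u)!` elements of
`𝓛^C₂` (i.e. isomorphism classes of labelled circuit graphs): any set `S` of pairwise
non-isomorphic labelled circuit graphs containing a representative of every isomorphism
class contained in `[G₁]` has exactly `α_l(u)! = ∏_j α_l(u)_j !` elements. -/
theorem statement12 {m : ℕ} (hm : 0 < m) (T1 : LCGraph m 2) (S : Set (LCGraph m 2))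
    (hSmem : ∀ T ∈ S, SimLC T1 T)
    (hScomplete : ∀ T : LCGraph m 2, SimLC T1 T → ∃ T' ∈ S, LCIso T T')
    (hSsep : ∀ T T', T ∈ S → T' ∈ S → LCIso T T' → T = T') :
    S.ncard = ∏ j,
      (univ.filter fun e => T1.G.head e = T1.G.ext 1 ∧ (T1.l e).2 = j).card.factorial := by
  classical
  have hch : ∀ p : {g : Equiv.Perm (S12Eu T1) // S12lab T1 ∘ g = S12lab T1},
      ∃ T' ∈ S, LCIso (S12replace T1 p.1 p.2) T' :=
    fun p => hScomplete _ (S12sim_replace T1 p.1 p.2)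
  choose T2 hT2S hT2iso using hch
  set Φ : {g : Equiv.Perm (S12Eu T1) // S12lab T1 ∘ g = S12lab T1} → ↥S :=
    fun p => ⟨T2 p, hT2S p⟩ with hΦ
  have hinjΦ : Function.Injective Φ := by
    intro p q hpq
    have hT : T2 p = T2 q := congrArg Subtype.val hpq
    have h2 : LCIso (T2 p) (S12replace T1 q.1 q.2) := by
      rw [hT]; exact stmt12_lciso_symm (hT2iso q)
    obtain ⟨σ, τ, hh, ht, hx, hw, hl, hci, hco⟩ := stmt12_lciso_trans (hT2iso p) h2
    have hτ : ∀ e, τ e = e := stmt12_rigid T1.G T1.c.cout T1.c.cout_bij hh ht hx hco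
    have hcpi : ∀ e, S12cpi T1 q.1 e = S12cpi T1 p.1 e := by
      intro e
      have h3 := hci e
      rwa [hτ e] at h3
    apply Subtype.ext
    apply Equiv.ext
    intro a
    have h3 := hcpi a.1
    simp only [S12cpi, dif_pos a.2] at h3
    have h4 : ((q.1 ⟨a.1, a.2⟩ : S12Eu T1) : Fin T1.G.nE) =
        ((p.1 ⟨a.1, a.2⟩ : S12Eu T1) : Fin T1.G.nE) :=
      (T1.c.cin_bij (T1.G.ext 1)).injOn (q.1 ⟨a.1, a.2⟩).2 (p.1 ⟨a.1, a.2⟩).2 h3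
    exact (Subtype.ext h4).symm
  have hsurjΦ : Function.Surjective Φ := by
    rintro ⟨T, hT⟩
    obtain ⟨σ, τ, hh, ht, hx, hw, hl, hci, hco⟩ := hSmem T hT
    have hdeg : T1.G.inDeg (T1.G.ext 1) = T.G.inDeg (σ (T1.G.ext 1)) := by
      refine stmt12_card_filter_equiv τ fun e => ?_
      rw [hh e]
      exact ⟨fun h' => by rw [h'], fun h' => σ.injective h'⟩
    have hmemτ : ∀ a : S12Eu T1, T.G.head (τ a.1) = σ (T1.G.ext 1) := by
      intro a; rw [hh, a.2]
    have hylt : ∀ a : S12Eu T1, T.c.cin (τ a.1) < T1.G.inDeg (T1.G.ext 1) := by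
      intro a
      rw [hdeg]
      exact (T.c.cin_bij (σ (T1.G.ext 1))).mapsTo (hmemτ a)
    have hex : ∀ a : S12Eu T1, ∃ x, T1.G.head x = T1.G.ext 1 ∧ T1.c.cin x = T.c.cin (τ a.1) :=
      fun a => (T1.c.cin_bij (T1.G.ext 1)).surjOn (hylt a)
    choose f hf1 hf2 using hex
    have hfinj : Function.Injective (fun a : S12Eu T1 => (⟨f a, hf1 a⟩ : S12Eu T1)) := by
      intro a b hab
      have h1 : f a = f b := congrArg Subtype.val hab
      have h2 : T.c.cin (τ a.1) = T.c.cin (τ b.1) := by rw [← hf2 a, ← hf2 b, h1]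
      have h3 : τ a.1 = τ b.1 :=
        (T.c.cin_bij (σ (T1.G.ext 1))).injOn (hmemτ a) (hmemτ b) h2
      exact Subtype.ext (τ.injective h3)
    set π : Equiv.Perm (S12Eu T1) :=
      Equiv.ofBijective _ (Finite.injective_iff_bijective.mp hfinj) with hπdef
    -- the two compatible systems
    have hs_lt : ∀ e ∈ (univ.filter fun e => T1.G.head e = T1.G.ext 1),
        T1.c.cin e < (univ.filter fun e => T1.G.head e = T1.G.ext 1).card := fun e he =>
      (T1.c.cin_bij (T1.G.ext 1)).mapsTo (Finset.mem_filter.mp he).2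
    have hs_inj : ∀ e ∈ (univ.filter fun e => T1.G.head e = T1.G.ext 1),
        ∀ e' ∈ (univ.filter fun e => T1.G.head e = T1.G.ext 1),
        T1.c.cin e = T1.c.cin e' → e = e' := fun e he e' he' h =>
      (T1.c.cin_bij (T1.G.ext 1)).injOn (Finset.mem_filter.mp he).2 (Finset.mem_filter.mp he').2 h
    have hs_comp : ∀ e ∈ (univ.filter fun e => T1.G.head e = T1.G.ext 1),
        ∀ e' ∈ (univ.filter fun e => T1.G.head e = T1.G.ext 1),
        T1.c.cin e ≤ T1.c.cin e' → (T1.l e).2 ≤ (T1.l e').2 := fun e he e' he' h =>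
      T1.compat.1 e e' ((Finset.mem_filter.mp he).2.trans (Finset.mem_filter.mp he').2.symm) h
    have hs_lt' : ∀ e ∈ (univ.filter fun e => T.G.head e = σ (T1.G.ext 1)),
        T.c.cin e < (univ.filter fun e => T.G.head e = σ (T1.G.ext 1)).card := fun e he =>
      (T.c.cin_bij (σ (T1.G.ext 1))).mapsTo (Finset.mem_filter.mp he).2
    have hs_inj' : ∀ e ∈ (univ.filter fun e => T.G.head e = σ (T1.G.ext 1)),
        ∀ e' ∈ (univ.filter fun e => T.G.head e = σ (T1.G.ext 1)),
        T.c.cin e = T.c.cin e' → e = e' := fun e he e' he' h =>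
      (T.c.cin_bij (σ (T1.G.ext 1))).injOn (Finset.mem_filter.mp he).2
        (Finset.mem_filter.mp he').2 h
    have hs_comp' : ∀ e ∈ (univ.filter fun e => T.G.head e = σ (T1.G.ext 1)),
        ∀ e' ∈ (univ.filter fun e => T.G.head e = σ (T1.G.ext 1)),
        T.c.cin e ≤ T.c.cin e' → (T.l e).2 ≤ (T.l e').2 := fun e he e' he' h =>
      T.compat.1 e e' ((Finset.mem_filter.mp he).2.trans (Finset.mem_filter.mp he').2.symm) h
    have hcnt : ∀ j : Fin m,
        ((univ.filter fun e => T1.G.head e = T1.G.ext 1).filter fun x => (T1.l x).2 = j).card =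
        ((univ.filter fun e => T.G.head e = σ (T1.G.ext 1)).filter
          fun x => (T.l x).2 = j).card := by
      intro j
      rw [Finset.filter_filter, Finset.filter_filter]
      refine stmt12_card_filter_equiv τ fun e => ?_
      rw [hh e, hl e]
      constructor
      · rintro ⟨h1, h2⟩; exact ⟨by rw [h1], h2⟩
      · rintro ⟨h1, h2⟩; exact ⟨σ.injective h1, h2⟩
    have hπlab : S12lab T1 ∘ π = S12lab T1 := by
      funext a
      have hkey : (T1.l (f a)).2 = (T.l (τ a.1)).2 :=
        stmt12_block_eq hs_lt hs_inj hs_comp hs_lt' hs_inj' hs_comp' hcnt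
          (Finset.mem_filter.mpr ⟨Finset.mem_univ _, hf1 a⟩)
          (Finset.mem_filter.mpr ⟨Finset.mem_univ _, hmemτ a⟩) (hf2 a)
      show (T1.l (f a)).2 = (T1.l a.1).2
      rw [hkey, hl a.1]
    refine ⟨⟨π, hπlab⟩, ?_⟩
    apply Subtype.ext
    show T2 ⟨π, hπlab⟩ = T
    have hiso2 : LCIso (S12replace T1 π hπlab) T := by
      refine ⟨σ, τ, hh, ht, hx, hw, hl, ?_, hco⟩
      intro e
      show T.c.cin (τ e) = S12cpi T1 π e
      by_cases h : T1.G.head e = T1.G.ext 1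
      · simp only [S12cpi, dif_pos h]
        exact (hf2 ⟨e, h⟩).symm
      · simp only [S12cpi, dif_neg h]
        exact hci e h
    exact hSsep _ _ (hT2S ⟨π, hπlab⟩) hT
      (stmt12_lciso_trans (stmt12_lciso_symm (hT2iso ⟨π, hπlab⟩)) hiso2)
  have hcard : Nat.card {g : Equiv.Perm (S12Eu T1) // S12lab T1 ∘ g = S12lab T1}
      = Nat.card ↥S := Nat.card_eq_of_bijective Φ ⟨hinjΦ, hsurjΦ⟩
  have h1 : S.ncard = Nat.card {g : Equiv.Perm (S12Eu T1) // S12lab T1 ∘ g = S12lab T1} := by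
    rw [← Nat.card_coe_set_eq, hcard]
  rw [h1, Nat.card_eq_fintype_card, DomMulAct.stabilizer_card (S12lab T1)]
  refine Finset.prod_congr rfl fun j _ => ?_
  congr 1
  have e1 : {a : S12Eu T1 // S12lab T1 a = j} ≃
      {e : Fin T1.G.nE // T1.G.head e = T1.G.ext 1 ∧ (T1.l e).2 = j} :=
    Equiv.subtypeSubtypeEquivSubtypeInter
      (fun e : Fin T1.G.nE => T1.G.head e = T1.G.ext 1) (fun e => (T1.l e).2 = j)
  rw [Fintype.card_congr e1, Fintype.card_subtype]
end
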